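/- arXiv:2211.04294 — 2 statements merged into one kernel-verified Lean document; each statement's English description precedes it below -/
import Mathlib

section
/- Let N ≥ 3, α ≤ 0, and b ∈ [0,2]. For a nonempty set Σ ⊆ ℝ^N with distance function d_Σ, define for distinct points u,v the quantity Q(u,v) = |u-v|^{N-b} · max{|u-v|, d_Σ(u), d_Σ(v)}^{-α}. Then there exists a constant C = C(N, α, b) > 0 such that for all pairwise distinct x, y, z ∈ ℝ^N, Q(x,y) ≤ C (Q(x,z) + Q(z,y)). -/
/-! If `z` is at least as close to `y` as to `x`, the triangle inequality gives
`|x - y| ≤ 2|x - z|`, and `d_Σ(y) ≤ d_Σ(z) + |z - y|` gives the same factor-two comparison for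
the maxima, so `Q(x, y) ≤ 2^(N - b - α) Q(x, z)` because both exponents `N - b` and `-α` are
nonnegative. In the other case one swaps `x` and `y`, `Q` being symmetric. -/

noncomputable def Qfun (N : ℕ) (α b : ℝ) (S : Set (EuclideanSpace ℝ (Fin N)))
    (u v : EuclideanSpace ℝ (Fin N)) : ℝ :=
  dist u v ^ ((N : ℝ) - b) *
    (max (max (dist u v) (Metric.infDist u S)) (Metric.infDist v S)) ^ (-α)

lemma rpow_mul_rpow_le_of_le_mul {a a' m m' c p q : ℝ} (ha : 0 ≤ a) (hm : 0 ≤ m) (hc : 0 < c)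
    (hp : 0 ≤ p) (hq : 0 ≤ q) (haa' : a ≤ c * a') (hmm' : m ≤ c * m') :
    a ^ p * m ^ q ≤ c ^ (p + q) * (a' ^ p * m' ^ q) := by
  have ha' : 0 ≤ a' := (mul_nonneg_iff_of_pos_left hc).mp (ha.trans haa')
  have hm' : 0 ≤ m' := (mul_nonneg_iff_of_pos_left hc).mp (hm.trans hmm')
  calc a ^ p * m ^ q ≤ (c * a') ^ p * (c * m') ^ q := by gcongr
    _ = c ^ (p + q) * (a' ^ p * m' ^ q) := by
      rw [Real.mul_rpow hc.le ha', Real.mul_rpow hc.le hm', Real.rpow_add hc]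
      ring

section PseudoMetric

variable {X : Type*} [PseudoMetricSpace X] {S : Set X} {x y z : X}

lemma dist_le_two_mul_of_dist_le (h : dist z y ≤ dist x z) : dist x y ≤ 2 * dist x z := by
  linarith [dist_triangle x z y]

lemma max_dist_infDist_le_two_mul_of_dist_le (h : dist z y ≤ dist x z) :
    max (max (dist x y) (Metric.infDist x S)) (Metric.infDist y S) ≤
      2 * max (max (dist x z) (Metric.infDist x S)) (Metric.infDist z S) := by
  set M := max (max (dist x z) (Metric.infDist x S)) (Metric.infDist z S)
  have hxz : dist x z ≤ M := (le_max_left _ _).trans (le_max_left _ _)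
  have hx : Metric.infDist x S ≤ M := (le_max_right _ _).trans (le_max_left _ _)
  have hz : Metric.infDist z S ≤ M := le_max_right _ _
  have hy : Metric.infDist y S ≤ Metric.infDist z S + dist z y := by
    simpa only [dist_comm] using Metric.infDist_le_infDist_add_dist (x := y) (y := z) (s := S)
  have hM : 0 ≤ M := Metric.infDist_nonneg.trans hz
  refine max_le (max_le ?_ ?_) ?_ <;> linarith [dist_le_two_mul_of_dist_le h]

end PseudoMetric

section Qfun

variable {N : ℕ} {α b : ℝ} {S : Set (EuclideanSpace ℝ (Fin N))}

lemma Qfun_nonneg (u v : EuclideanSpace ℝ (Fin N)) : 0 ≤ Qfun N α b S u v :=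
  mul_nonneg (Real.rpow_nonneg dist_nonneg _)
    (Real.rpow_nonneg (Metric.infDist_nonneg.trans (le_max_right _ _)) _)

lemma Qfun_comm (u v : EuclideanSpace ℝ (Fin N)) : Qfun N α b S u v = Qfun N α b S v u := by
  simp only [Qfun, dist_comm u v, max_right_comm]

lemma Qfun_le_of_dist_le (hα : α ≤ 0) (hbN : b ≤ N) {x y z : EuclideanSpace ℝ (Fin N)}
    (h : dist z y ≤ dist x z) :
    Qfun N α b S x y ≤ 2 ^ ((N : ℝ) - b - α) * Qfun N α b S x z := by
  rw [sub_eq_add_neg _ α]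
  exact rpow_mul_rpow_le_of_le_mul dist_nonneg
    (Metric.infDist_nonneg.trans (le_max_right _ _)) two_pos (by linarith) (by linarith)
    (dist_le_two_mul_of_dist_le h) (max_dist_infDist_le_two_mul_of_dist_le h)

end Qfun

theorem Qfun_quasi_triangle_general (N : ℕ) (hN : 3 ≤ N) (α b : ℝ)
    (hα : α ≤ 0) (hb2 : b ≤ 2)
    (S : Set (EuclideanSpace ℝ (Fin N))) :
    ∃ C > 0, ∀ x y z : EuclideanSpace ℝ (Fin N), x ≠ y → x ≠ z → y ≠ z →
      Qfun N α b S x y ≤ C * (Qfun N α b S x z + Qfun N α b S z y) := by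
  have hbN : b ≤ N := by
    have : (3 : ℝ) ≤ N := by exact_mod_cast hN
    linarith
  refine ⟨2 ^ ((N : ℝ) - b - α), by positivity, fun x y z _ _ _ => ?_⟩
  have hxz := Qfun_nonneg (α := α) (b := b) (S := S) x z
  have hzy := Qfun_nonneg (α := α) (b := b) (S := S) z y
  rcases le_total (dist z y) (dist x z) with h | h
  · calc Qfun N α b S x y ≤ 2 ^ ((N : ℝ) - b - α) * Qfun N α b S x z := Qfun_le_of_dist_le hα hbN h
      _ ≤ _ := by gcongr; linarith
  · calc Qfun N α b S x y = Qfun N α b S y x := Qfun_comm x y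
      _ ≤ 2 ^ ((N : ℝ) - b - α) * Qfun N α b S y z := by
        refine Qfun_le_of_dist_le hα hbN ?_
        rwa [dist_comm z x, dist_comm y z]
      _ ≤ _ := by rw [Qfun_comm y z]; gcongr; linarith

theorem Qfun_quasi_triangle (N : ℕ) (hN : 3 ≤ N) (α b : ℝ)
    (hα : α ≤ 0) (hb0 : 0 ≤ b) (hb2 : b ≤ 2)
    (S : Set (EuclideanSpace ℝ (Fin N))) (hS : S.Nonempty) :
    ∃ C > 0, ∀ x y z : EuclideanSpace ℝ (Fin N), x ≠ y → x ≠ z → y ≠ z →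
      Qfun N α b S x y ≤ C * (Qfun N α b S x z + Qfun N α b S z y) :=
  Qfun_quasi_triangle_general N hN α b hα hb2 S
end

section
/- Let Ω ⊂ ℝ^N be a bounded domain, Σ ⊆ closure(Ω) nonempty, and for α ≤ N define, for distinct x, y ∈ closure(Ω), 𝒩_α(x,y) = max{|x-y|, d_Σ(x), d_Σ(y)}^α / (|x-y|^{N-2} · max{|x-y|, d_{∂Ω}(x), d_{∂Ω}(y)}²), where d_{∂Ω} and d_Σ are the distance functions to ∂Ω and Σ. Assume Σ ⊆ ∂Ω so that d_{∂Ω} ≤ d_Σ everywhere. Then there exists a constant C = C(N, α, diam Ω) > 0 such that 1/𝒩_α(x,y) ≤ C (1/𝒩_α(x,z) + 1/𝒩_α(z,y)) for all pairwise distinct x, y, z ∈ closure(Ω). -/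
noncomputable def Nker (N : ℕ) (α : ℝ)
    (S B : Set (EuclideanSpace ℝ (Fin N))) (x y : EuclideanSpace ℝ (Fin N)) : ℝ :=
  (max (max (dist x y) (Metric.infDist x S)) (Metric.infDist y S)) ^ α /
    (dist x y ^ ((N : ℝ) - 2) *
      (max (max (dist x y) (Metric.infDist x B)) (Metric.infDist y B)) ^ (2 : ℝ))

/-!
Assume `|z - y| ≤ |x - z|` (the other case is symmetric), write `a = |x - y|`, `b = |x - z|`, and let
`s, s'` (resp. `t, t'`) be the maxima with `d_Σ` (resp. `d_∂Ω`) for the pairs `(x, y)`, `(x, z)`.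
The triangle inequality gives `a ≤ 2b`, `t ≤ 2t'`, `s ≤ 2s'` and `s' ≤ s + b`, and `d_∂Ω ≤ d_Σ` gives
`a, t ≤ s`. If `b ≤ s`, then `s` and `s'` agree up to a factor `2`, and so do the three factors of
`1 / 𝒩_α`. If `s ≤ b`, then `1 / 𝒩_α(x, y) ≤ s ^ (N - α) ≤ b ^ (N - α) ≤ b ^ (N - 2) t' ^ 2 / b ^ α`,
and `b ≤ s' ≤ 2b`. Either way `C = 2 ^ (N + |α|)` works.
-/

open Metric Real

noncomputable def maxDist {E : Type*} [PseudoMetricSpace E] (s : Set E) (x y : E) : ℝ :=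
  max (max (dist x y) (infDist x s)) (infDist y s)

section maxDist

variable {E : Type*} [PseudoMetricSpace E] {s t : Set E} {x y z : E}

theorem dist_le_maxDist : dist x y ≤ maxDist s x y :=
  le_max_of_le_left (le_max_left _ _)

theorem maxDist_nonneg : 0 ≤ maxDist s x y :=
  dist_nonneg.trans dist_le_maxDist

theorem maxDist_comm (s : Set E) (x y : E) : maxDist s x y = maxDist s y x := by
  rw [maxDist, maxDist, dist_comm, max_right_comm]

theorem maxDist_le_maxDist_add_dist (s : Set E) (x y z : E) :
    maxDist s x z ≤ maxDist s x y + dist y z := by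
  have hxy : dist x y ≤ maxDist s x y := dist_le_maxDist
  have hx : infDist x s ≤ maxDist s x y := le_max_of_le_left (le_max_right _ _)
  have hy : infDist y s ≤ maxDist s x y := le_max_right _ _
  have hz : infDist z s ≤ infDist y s + dist y z := by
    rw [dist_comm]
    exact infDist_le_infDist_add_dist
  refine max_le (max_le ?_ ?_) ?_
  · linarith [dist_triangle x y z]
  · linarith [dist_nonneg (x := y) (y := z)]
  · linarith

theorem maxDist_le_two_mul_of_dist_le (s : Set E) (h : dist z y ≤ dist x z) :
    maxDist s x y ≤ 2 * maxDist s x z := by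
  linarith [maxDist_le_maxDist_add_dist s x z y, dist_le_maxDist (s := s) (x := x) (y := z)]

theorem maxDist_anti (hst : s ⊆ t) (hs : s.Nonempty) : maxDist t x y ≤ maxDist s x y :=
  max_le_max (max_le_max le_rfl (infDist_le_infDist_of_subset hst hs))
    (infDist_le_infDist_of_subset hst hs)

end maxDist

theorem rpow_le_two_rpow_abs_mul_rpow {p q : ℝ} (α : ℝ) (hp : 0 < p) (hpq : p ≤ 2 * q)
    (hqp : q ≤ 2 * p) : q ^ α ≤ 2 ^ |α| * p ^ α := by
  have hq : 0 < q := by linarith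
  rcases le_total 0 α with hα | hα
  · rw [abs_of_nonneg hα, ← mul_rpow zero_le_two hp.le]
    exact rpow_le_rpow hq.le hqp hα
  · rw [abs_of_nonpos hα, rpow_neg zero_le_two, ← inv_rpow zero_le_two,
      ← mul_rpow (by norm_num) hp.le]
    exact rpow_le_rpow_of_nonpos (by positivity) (by linarith) hα

theorem div_rpow_le_two_rpow_abs_mul_div_rpow {p q Y : ℝ} (α : ℝ) (hY : 0 ≤ Y) (hp : 0 < p)
    (hpq : p ≤ 2 * q) (hqp : q ≤ 2 * p) : Y / p ^ α ≤ 2 ^ |α| * (Y / q ^ α) := by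
  have hq : 0 < q := by linarith
  rw [← mul_div_assoc, ← mul_div_mul_left Y (p ^ α) (by positivity : (2 : ℝ) ^ |α| ≠ 0)]
  exact div_le_div_of_nonneg_left (by positivity) (by positivity)
    (rpow_le_two_rpow_abs_mul_rpow α hp hpq hqp)

theorem rpow_sub_two_mul_rpow_two_le {n a b t t' : ℝ} (hn : 2 ≤ n) (ha : 0 ≤ a)
    (hab : a ≤ 2 * b) (ht : 0 ≤ t) (htt' : t ≤ 2 * t') :
    a ^ (n - 2) * t ^ (2 : ℝ) ≤ 2 ^ n * (b ^ (n - 2) * t' ^ (2 : ℝ)) := by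
  have hb : 0 ≤ b := by linarith
  have ht' : 0 ≤ t' := by linarith
  calc a ^ (n - 2) * t ^ (2 : ℝ) ≤ (2 * b) ^ (n - 2) * (2 * t') ^ (2 : ℝ) := by
        gcongr
    _ = 2 ^ n * (b ^ (n - 2) * t' ^ (2 : ℝ)) := by
        rw [mul_rpow zero_le_two hb, mul_rpow zero_le_two ht', rpow_sub two_pos]
        field_simp

theorem rpow_sub_two_mul_rpow_two_div_rpow_le {n α a b s t t' : ℝ} (hn : 2 ≤ n) (hα : α ≤ n)
    (ha : 0 < a) (has : a ≤ s) (ht : 0 ≤ t) (hts : t ≤ s) (hsb : s ≤ b) (hbt' : b ≤ t') :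
    a ^ (n - 2) * t ^ (2 : ℝ) / s ^ α ≤ b ^ (n - 2) * t' ^ (2 : ℝ) / b ^ α := by
  have hs : 0 < s := ha.trans_le has
  have hb : 0 < b := hs.trans_le hsb
  calc a ^ (n - 2) * t ^ (2 : ℝ) / s ^ α ≤ s ^ (n - 2) * s ^ (2 : ℝ) / s ^ α := by
        gcongr
    _ = s ^ (n - α) := by rw [← rpow_add hs, ← rpow_sub hs, sub_add_cancel]
    _ ≤ b ^ (n - α) := rpow_le_rpow hs.le hsb (by linarith)
    _ = b ^ (n - 2) * b ^ (2 : ℝ) / b ^ α := by rw [← rpow_add hb, ← rpow_sub hb, sub_add_cancel]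
    _ ≤ b ^ (n - 2) * t' ^ (2 : ℝ) / b ^ α := by gcongr

theorem reciprocal_kernel_le {n α a b s s' t t' : ℝ} (hn : 2 ≤ n) (hα : α ≤ n) (ha : 0 < a)
    (hab : a ≤ 2 * b) (has : a ≤ s) (hbs' : b ≤ s') (hbt' : b ≤ t') (ht : 0 ≤ t) (hts : t ≤ s)
    (htt' : t ≤ 2 * t') (hss' : s ≤ 2 * s') (hs's : s' ≤ s + b) :
    a ^ (n - 2) * t ^ (2 : ℝ) / s ^ α ≤ 2 ^ (n + |α|) * (b ^ (n - 2) * t' ^ (2 : ℝ) / s' ^ α) := by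
  have hb : 0 < b := by linarith
  have hs : 0 < s := ha.trans_le has
  have hs' : 0 < s' := hb.trans_le hbs'
  have hY : 0 ≤ b ^ (n - 2) * t' ^ (2 : ℝ) := by
    have : 0 ≤ t' := hb.le.trans hbt'
    positivity
  rw [rpow_add two_pos, mul_assoc]
  rcases le_total b s with hbs | hsb
  · calc a ^ (n - 2) * t ^ (2 : ℝ) / s ^ α ≤ 2 ^ n * (b ^ (n - 2) * t' ^ (2 : ℝ)) / s ^ α := by
          exact div_le_div_of_nonneg_right
            (rpow_sub_two_mul_rpow_two_le hn ha.le hab ht htt') (by positivity)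
      _ ≤ 2 ^ n * (2 ^ |α| * (b ^ (n - 2) * t' ^ (2 : ℝ) / s' ^ α)) := by
          rw [mul_div_assoc]
          gcongr
          exact div_rpow_le_two_rpow_abs_mul_div_rpow α hY hs hss' (by linarith)
  · calc a ^ (n - 2) * t ^ (2 : ℝ) / s ^ α ≤ b ^ (n - 2) * t' ^ (2 : ℝ) / b ^ α :=
          rpow_sub_two_mul_rpow_two_div_rpow_le hn hα ha has ht hts hsb hbt'
      _ ≤ 2 ^ |α| * (b ^ (n - 2) * t' ^ (2 : ℝ) / s' ^ α) :=
          div_rpow_le_two_rpow_abs_mul_div_rpow α hY hb (by linarith) (by linarith)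
      _ ≤ 2 ^ n * (2 ^ |α| * (b ^ (n - 2) * t' ^ (2 : ℝ) / s' ^ α)) :=
          le_mul_of_one_le_left (by positivity [hY, hs']) (one_le_rpow one_le_two (by linarith))

section Nker

variable {N : ℕ} {α : ℝ} {S B : Set (EuclideanSpace ℝ (Fin N))} {x y z : EuclideanSpace ℝ (Fin N)}

theorem Nker_eq (x y : EuclideanSpace ℝ (Fin N)) :
    Nker N α S B x y = maxDist S x y ^ α / (dist x y ^ ((N : ℝ) - 2) * maxDist B x y ^ (2 : ℝ)) :=
  rfl

theorem one_div_Nker :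
    1 / Nker N α S B x y = dist x y ^ ((N : ℝ) - 2) * maxDist B x y ^ (2 : ℝ) / maxDist S x y ^ α :=
  one_div_div _ _

theorem Nker_comm (x y : EuclideanSpace ℝ (Fin N)) : Nker N α S B x y = Nker N α S B y x := by
  rw [Nker_eq, Nker_eq, maxDist_comm S, maxDist_comm B, dist_comm]

theorem one_div_Nker_nonneg : 0 ≤ 1 / Nker N α S B x y := by
  rw [one_div_Nker]
  have := maxDist_nonneg (s := S) (x := x) (y := y)
  have := maxDist_nonneg (s := B) (x := x) (y := y)
  positivity

theorem one_div_Nker_le_of_dist_le (hN : 2 ≤ N) (hα : α ≤ N) (hSB : S ⊆ B) (hS : S.Nonempty)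
    (hxy : x ≠ y) (hzy : dist z y ≤ dist x z) :
    1 / Nker N α S B x y ≤ 2 ^ ((N : ℝ) + |α|) * (1 / Nker N α S B x z) := by
  rw [one_div_Nker, one_div_Nker]
  have hS' : maxDist S x z ≤ maxDist S x y + dist x z := by
    have := maxDist_le_maxDist_add_dist S x y z
    rw [dist_comm y z] at this
    linarith
  exact reciprocal_kernel_le (by exact_mod_cast hN) hα (dist_pos.2 hxy)
    (by linarith [dist_triangle x z y]) dist_le_maxDist dist_le_maxDist dist_le_maxDist
    maxDist_nonneg (maxDist_anti hSB hS) (maxDist_le_two_mul_of_dist_le B hzy)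
    (maxDist_le_two_mul_of_dist_le S hzy) hS'

end Nker

theorem Nker_quasi_metric_general (N : ℕ) (hN : 3 ≤ N) (α : ℝ) (hα : α ≤ (N : ℝ))
    (Ω S : Set (EuclideanSpace ℝ (Fin N)))
    (hSne : S.Nonempty) (hSsub : S ⊆ frontier Ω) :
    ∃ C > 0, ∀ x ∈ closure Ω, ∀ y ∈ closure Ω, ∀ z ∈ closure Ω,
      x ≠ y → x ≠ z → y ≠ z →
      1 / Nker N α S (frontier Ω) x y ≤
        C * (1 / Nker N α S (frontier Ω) x z + 1 / Nker N α S (frontier Ω) z y) := by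
  refine ⟨2 ^ ((N : ℝ) + |α|), by positivity, fun x _ y _ z _ hxy _ _ => ?_⟩
  have hN2 : 2 ≤ N := by omega
  rcases le_total (dist z y) (dist x z) with h | h
  · refine (one_div_Nker_le_of_dist_le hN2 hα hSsub hSne hxy h).trans ?_
    gcongr
    exact le_add_of_nonneg_right one_div_Nker_nonneg
  · have h' : dist z x ≤ dist y z := by rwa [dist_comm z x, dist_comm y z]
    have hyx := one_div_Nker_le_of_dist_le hN2 hα hSsub hSne hxy.symm h'
    rw [Nker_comm y x, Nker_comm y z] at hyx
    refine hyx.trans ?_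
    gcongr
    exact le_add_of_nonneg_left one_div_Nker_nonneg

theorem Nker_quasi_metric (N : ℕ) (hN : 3 ≤ N) (α : ℝ) (hα : α ≤ (N : ℝ))
    (Ω S : Set (EuclideanSpace ℝ (Fin N)))
    (hΩopen : IsOpen Ω) (hΩbd : Bornology.IsBounded Ω) (hΩne : Ω.Nonempty)
    (hSne : S.Nonempty) (hSsub : S ⊆ frontier Ω) :
    ∃ C > 0, ∀ x ∈ closure Ω, ∀ y ∈ closure Ω, ∀ z ∈ closure Ω,
      x ≠ y → x ≠ z → y ≠ z →
      1 / Nker N α S (frontier Ω) x y ≤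
        C * (1 / Nker N α S (frontier Ω) x z + 1 / Nker N α S (frontier Ω) z y) :=
  Nker_quasi_metric_general N hN α hα Ω S hSne hSsub
end
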